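/- arXiv:1002.2163 — 3 statements merged into one kernel-verified Lean document; each statement's English description precedes it below -/
import Mathlib

section
/- For the M/M/∞ queue with birth rates b_k = λ and death rates a_k = k, invariant measure μ = Poisson(λ), and g₀(n) = n − λ: for every κ > 0, U(n) = κⁿ satisfies (ℒ + ((κ−1)/κ)g₀)U = ((κ−1)²/κ)λ·U, where ℒf(n) = λ(f(n+1)−f(n)) + n(f(n−1)−f(n)). Consequently the cumulant Λ(sg₀) equals λs²/(1−s) for s < 1 and +∞ for s ≥ 1. -/
open MeasureTheory ProbabilityTheory Real

/-- The Schrödinger cumulant set for the M/M/∞ queue (`b_k = λ`, `a_k = k`,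
invariant measure `μ = Poisson(λ)`) and observable `g₀(n) = n - λ`:
`Λ(s g₀) = sup { ∫ s g₀ h² dμ - ℰ(h,h) : μ(h²) = 1 }` with Dirichlet form
`ℰ(h,h) = ∑ μ_n λ (h(n+1)-h(n))²`. -/
noncomputable def mmInfCumulantSet (lam : NNReal) (s : ℝ) : Set ℝ :=
  {v : ℝ | ∃ h : ℕ → ℝ,
    Summable (fun n => poissonPMFReal lam n * h n ^ 2) ∧
    (∑' n : ℕ, poissonPMFReal lam n * h n ^ 2) = 1 ∧
    Summable (fun n => poissonPMFReal lam n * ((n : ℝ) - (lam : ℝ)) * h n ^ 2) ∧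
    Summable (fun n => poissonPMFReal lam n * (lam : ℝ) * (h (n + 1) - h n) ^ 2) ∧
    v = s * (∑' n : ℕ, poissonPMFReal lam n * ((n : ℝ) - (lam : ℝ)) * h n ^ 2)
        - ∑' n : ℕ, poissonPMFReal lam n * (lam : ℝ) * (h (n + 1) - h n) ^ 2}

/-! The eigenfunction `κⁿ` suggests the test functions `h ∝ κⁿ`. By the Poisson generating
function `∑ μₙ xⁿ = e^{λ(x-1)}` they realise the value `sλ(κ² - 1) - λ(κ - 1)²`, which is
`λs²/(1-s)` at `κ = 1/(1-s)` and grows like `2λκ` when `s ≥ 1`. For the upper bound, the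
Poisson identity `∑ n μₙ f(n) = λ ∑ μₙ f(n+1)` turns `∑ μₙ g₀(n) h(n)²` into
`λ ∑ μₙ (h(n+1)² - h(n)²)`, and completing the square gives, termwise,
`s(b² - a²) - (b - a)² ≤ s²a²/(1-s)` for `s < 1`. -/

namespace ProbabilityTheory

lemma natCast_add_one_mul_poissonPMFReal_succ (r : NNReal) (n : ℕ) :
    ((n : ℝ) + 1) * poissonPMFReal r (n + 1) = r * poissonPMFReal r n := by
  simp only [poissonPMFReal, Nat.factorial_succ, pow_succ]
  push_cast
  field_simp

lemma hasSum_natCast_mul_poissonPMFReal_iff (r : NNReal) (f : ℕ → ℝ) (a : ℝ) :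
    HasSum (fun n : ℕ => (n : ℝ) * poissonPMFReal r n * f n) a ↔
      HasSum (fun n => (r : ℝ) * poissonPMFReal r n * f (n + 1)) a := by
  rw [← hasSum_nat_add_iff' 1, Finset.sum_range_one, Nat.cast_zero, zero_mul, zero_mul, sub_zero]
  congr! 2 with n
  push_cast
  linear_combination f (n + 1) * natCast_add_one_mul_poissonPMFReal_succ r n

lemma hasSum_poissonPMFReal_mul_pow (r : NNReal) (x : ℝ) :
    HasSum (fun n => poissonPMFReal r n * x ^ n) (exp (r * (x - 1))) := by
  have hexp : HasSum (fun n : ℕ => ((r : ℝ) * x) ^ n / n.factorial) (exp (r * x)) :=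
    exp_eq_exp_ℝ ▸ NormedSpace.expSeries_div_hasSum_exp _
  rw [show (r : ℝ) * (x - 1) = -r + r * x by ring, exp_add]
  refine (hexp.mul_left _).congr_fun fun n => ?_
  simp only [poissonPMFReal, mul_pow]
  ring

lemma hasSum_natCast_mul_poissonPMFReal_mul_pow (r : NNReal) (x : ℝ) :
    HasSum (fun n : ℕ => (n : ℝ) * poissonPMFReal r n * x ^ n) (r * x * exp (r * (x - 1))) := by
  rw [hasSum_natCast_mul_poissonPMFReal_iff]
  exact ((hasSum_poissonPMFReal_mul_pow r x).mul_left _).congr_fun fun n => by ring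

end ProbabilityTheory

lemma mmInf_generator_add_potential_pow {κ : ℝ} (hκ : κ ≠ 0) (lam : ℝ) (n : ℕ) :
    (lam * (κ ^ (n + 1) - κ ^ n) + (n : ℝ) * (κ ^ (n - 1) - κ ^ n))
        + ((κ - 1) / κ) * ((n : ℝ) - lam) * κ ^ n
      = ((κ - 1) ^ 2 / κ) * lam * κ ^ n := by
  rcases n with _ | m
  · field_simp
    ring
  · rw [Nat.add_sub_cancel]
    push_cast
    field_simp
    ring

lemma mul_sq_sub_sq_sub_sub_sq_le {s : ℝ} (hs : s < 1) (a b : ℝ) :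
    s * (b ^ 2 - a ^ 2) - (b - a) ^ 2 ≤ s ^ 2 / (1 - s) * a ^ 2 := by
  have h1s : 0 < 1 - s := sub_pos.2 hs
  have key : s ^ 2 / (1 - s) * a ^ 2 - (s * (b ^ 2 - a ^ 2) - (b - a) ^ 2)
      = (a - (1 - s) * b) ^ 2 / (1 - s) := by
    field_simp
    ring
  linarith [div_nonneg (sq_nonneg (a - (1 - s) * b)) h1s.le]

lemma mem_mmInfCumulantSet_pow (lam : NNReal) (s κ : ℝ) :
    s * (lam * (κ ^ 2 - 1)) - lam * (κ - 1) ^ 2 ∈ mmInfCumulantSet lam s := by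
  set c := exp (-(lam * (κ ^ 2 - 1)) / 2)
  have hc : c ^ 2 * exp (lam * (κ ^ 2 - 1)) = 1 := by
    rw [← exp_nat_mul, ← exp_add]
    ring_nf
    exact exp_zero
  have hG := hasSum_poissonPMFReal_mul_pow lam (κ ^ 2)
  have hN := hasSum_natCast_mul_poissonPMFReal_mul_pow lam (κ ^ 2)
  have hnorm : HasSum (fun n => poissonPMFReal lam n * (c * κ ^ n) ^ 2) 1 := by
    rw [← hc]
    exact (hG.mul_left _).congr_fun fun n => by ring
  have hpot : HasSum (fun n : ℕ => poissonPMFReal lam n * ((n : ℝ) - lam) * (c * κ ^ n) ^ 2)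
      (lam * (κ ^ 2 - 1)) := by
    rw [show (lam : ℝ) * (κ ^ 2 - 1) = c ^ 2 * (lam * κ ^ 2 * exp (lam * (κ ^ 2 - 1))
      - lam * exp (lam * (κ ^ 2 - 1))) by linear_combination (-(lam : ℝ) * (κ ^ 2 - 1)) * hc]
    exact ((hN.sub (hG.mul_left _)).mul_left _).congr_fun fun n => by ring
  have hdir : HasSum
      (fun n => poissonPMFReal lam n * lam * (c * κ ^ (n + 1) - c * κ ^ n) ^ 2)
      (lam * (κ - 1) ^ 2) := by
    simpa only [mul_one] using (hnorm.mul_left ((lam : ℝ) * (κ - 1) ^ 2)).congr_fun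
      fun n => by ring
  exact ⟨fun n => c * κ ^ n, hnorm.summable, hnorm.tsum_eq, hpot.summable, hdir.summable,
    by rw [hpot.tsum_eq, hdir.tsum_eq]⟩

lemma le_of_mem_mmInfCumulantSet {lam : NNReal} {s v : ℝ} (hs : s < 1)
    (hv : v ∈ mmInfCumulantSet lam s) : v ≤ lam * s ^ 2 / (1 - s) := by
  obtain ⟨h, hsum, hnorm, hpot, hdir, rfl⟩ := hv
  set A := ∑' n : ℕ, poissonPMFReal lam n * ((n : ℝ) - lam) * h n ^ 2
  have hfirst : HasSum (fun n : ℕ => (n : ℝ) * poissonPMFReal lam n * h n ^ 2) (A + lam) := by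
    have := hpot.hasSum.add (hsum.hasSum.mul_left (lam : ℝ))
    rw [hnorm, mul_one] at this
    exact this.congr_fun fun n => by ring
  have hA : HasSum (fun n => lam * poissonPMFReal lam n * (h (n + 1) ^ 2 - h n ^ 2)) A := by
    have := ((hasSum_natCast_mul_poissonPMFReal_iff lam _ _).1 hfirst).sub
      (hsum.hasSum.mul_left (lam : ℝ))
    rw [hnorm, mul_one, add_sub_cancel_right] at this
    exact this.congr_fun fun n => by ring
  have hbound : HasSum (fun n => lam * s ^ 2 / (1 - s) * (poissonPMFReal lam n * h n ^ 2))
      (lam * s ^ 2 / (1 - s)) := by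
    simpa only [hnorm, mul_one] using hsum.hasSum.mul_left ((lam : ℝ) * s ^ 2 / (1 - s))
  refine hasSum_le (fun n => ?_) ((hA.mul_left s).sub hdir.hasSum) hbound
  have := mul_le_mul_of_nonneg_left (mul_sq_sub_sq_sub_sub_sq_le hs (h n) (h (n + 1)))
    (mul_nonneg lam.coe_nonneg (poissonPMFReal_nonneg (r := lam) (n := n)))
  linear_combination this

lemma isGreatest_mmInfCumulantSet (lam : NNReal) {s : ℝ} (hs : s < 1) :
    IsGreatest (mmInfCumulantSet lam s) (lam * s ^ 2 / (1 - s)) := by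
  have h1s : 1 - s ≠ 0 := (sub_pos.2 hs).ne'
  have hval : s * (lam * ((1 / (1 - s)) ^ 2 - 1)) - lam * (1 / (1 - s) - 1) ^ 2
      = lam * s ^ 2 / (1 - s) := by
    field_simp
    ring
  exact ⟨hval ▸ mem_mmInfCumulantSet_pow lam s _, fun _ => le_of_mem_mmInfCumulantSet hs⟩

lemma not_bddAbove_mmInfCumulantSet {lam : NNReal} (hlam : 0 < lam) {s : ℝ} (hs : 1 ≤ s) :
    ¬ BddAbove (mmInfCumulantSet lam s) := by
  rintro ⟨M, hM⟩
  have hl : (0 : ℝ) < lam := hlam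
  set κ := (|M| + 1) / lam + 1
  have hκ : lam * (κ - 1) = |M| + 1 := by
    simp only [κ, add_sub_cancel_right]
    field_simp
  have hκ1 : 0 ≤ κ - 1 := by
    simp only [κ, add_sub_cancel_right]
    positivity
  have hle := hM (mem_mmInfCumulantSet_pow lam s κ)
  -- for `s ≥ 1` the value at `κ` is at least `2λ(κ - 1)`
  nlinarith [mul_nonneg (sub_nonneg.2 hs) (mul_nonneg hl.le (by nlinarith : (0 : ℝ) ≤ κ ^ 2 - 1)),
    le_abs_self M]

/-- M/M/∞ queue: for every `κ > 0` the function `U(n) = κⁿ` is an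
eigenfunction: `(ℒ + ((κ-1)/κ) g₀) U = ((κ-1)²/κ) λ U` where
`ℒf(n) = λ(f(n+1)-f(n)) + n(f(n-1)-f(n))`; consequently the cumulant
`Λ(s g₀)` equals `λ s²/(1-s)` for `s < 1` and `+∞` (the defining set is
unbounded above) for `s ≥ 1`. -/
theorem mmInf_schrodinger_eigenfunction_and_cumulant
    (lam : NNReal) (hlam : 0 < lam) :
    (∀ κ : ℝ, 0 < κ → ∀ n : ℕ,
      ((lam : ℝ) * (κ ^ (n + 1) - κ ^ n) + (n : ℝ) * (κ ^ (n - 1) - κ ^ n))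
          + ((κ - 1) / κ) * ((n : ℝ) - (lam : ℝ)) * κ ^ n
        = ((κ - 1) ^ 2 / κ) * (lam : ℝ) * κ ^ n) ∧
    (∀ s : ℝ, s < 1 →
      sSup (mmInfCumulantSet lam s) = (lam : ℝ) * s ^ 2 / (1 - s)) ∧
    (∀ s : ℝ, 1 ≤ s → ¬ BddAbove (mmInfCumulantSet lam s)) :=
  ⟨fun _ hκ => mmInf_generator_add_potential_pow hκ.ne' lam,
    fun _ hs => (isGreatest_mmInfCumulantSet lam hs).csSup_eq,
    fun _ => not_bddAbove_mmInfCumulantSet hlam⟩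
end

section
/- Let ρ : ℕ → ℝ be increasing with ρ ∈ L²(μ) for the reversible measure μ of a birth–death process, and let g satisfy μ(g)=0 and sup_k |g(k+1)−g(k)|/(ρ(k+1)−ρ(k)) = 1. Then for every k ≥ 0: ∑_{i≥k} μ_i g(i) ≤ ∑_{i≥k} μ_i (ρ(i) − μ(ρ)). -/
/-!
Put `h := g - (ρ - μ(ρ))`. The Lipschitz condition makes `h` antitone, and
`μ(h) = 0`. A tail `∑_{i ≥ k} μ_i h(i)` of an antitone function with total mass `≤ 0` is
`≤ 0`: if `h(k) ≤ 0` every term is nonpositive, and otherwise every term of the head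
`∑_{i < k} μ_i h(i)` is nonnegative.
-/

open Finset

theorem tsum_nat_add_mul_nonpos_of_antitone {w h : ℕ → ℝ} (hw : ∀ n, 0 ≤ w n)
    (hanti : Antitone h) (hsum : Summable fun n => w n * h n)
    (htot : ∑' n, w n * h n ≤ 0) (k : ℕ) :
    ∑' i, w (i + k) * h (i + k) ≤ 0 := by
  rcases le_or_gt (h k) 0 with hk | hk
  · exact tsum_nonpos fun i =>
      mul_nonpos_of_nonneg_of_nonpos (hw _) ((hanti (Nat.le_add_left k i)).trans hk)
  · have hhead : 0 ≤ ∑ i ∈ range k, w i * h i := sum_nonneg fun i hi =>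
      mul_nonneg (hw i) (hk.le.trans (hanti (mem_range.mp hi).le))
    have hsplit := hsum.sum_add_tsum_nat_add k
    linarith

theorem tsum_nat_add_mul_le_of_antitone_sub {w f F : ℕ → ℝ} (hw : ∀ n, 0 ≤ w n)
    (hanti : Antitone (f - F)) (hf : Summable fun n => w n * f n)
    (hF : Summable fun n => w n * F n) (hmean : ∑' n, w n * f n ≤ ∑' n, w n * F n) (k : ℕ) :
    ∑' i, w (i + k) * f (i + k) ≤ ∑' i, w (i + k) * F (i + k) := by
  have hdiff : Summable fun n => w n * (f - F) n := by
    simpa only [Pi.sub_apply, mul_sub] using hf.sub hF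
  have htot : ∑' n, w n * (f - F) n ≤ 0 := by
    simp only [Pi.sub_apply, mul_sub]
    rw [hf.tsum_sub hF]
    linarith
  have htail := tsum_nat_add_mul_nonpos_of_antitone hw hanti hdiff htot k
  simp only [Pi.sub_apply, mul_sub] at htail
  rw [((summable_nat_add_iff k).mpr hf).tsum_sub ((summable_nat_add_iff k).mpr hF)] at htail
  linarith

theorem antitone_sub_of_iSup_abs_sub_div_sub_eq_one {g ρ : ℕ → ℝ} (hρ : StrictMono ρ)
    (hLip : (⨆ k : ℕ, |g (k + 1) - g k| / (ρ (k + 1) - ρ k)) = 1) : Antitone (g - ρ) := by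
  have hbdd : BddAbove (Set.range fun k : ℕ => |g (k + 1) - g k| / (ρ (k + 1) - ρ k)) := by
    by_contra hc
    rw [Real.iSup_of_not_bddAbove hc] at hLip
    exact zero_ne_one hLip
  refine antitone_nat_of_succ_le fun k => ?_
  have hρk : 0 < ρ (k + 1) - ρ k := sub_pos.mpr (hρ k.lt_succ_self)
  have hk : |g (k + 1) - g k| ≤ ρ (k + 1) - ρ k :=
    (div_le_one hρk).mp (hLip ▸ le_ciSup hbdd k)
  simp only [Pi.sub_apply]
  linarith [le_abs_self (g (k + 1) - g k)]

theorem pos_of_succ_eq_mul_div {π b a : ℕ → ℝ} (hb : ∀ k, 0 < b k) (ha : ∀ k, 1 ≤ k → 0 < a k)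
    (hπ0 : 0 < π 0) (hπ : ∀ n, π (n + 1) = π n * b n / a (n + 1)) (n : ℕ) : 0 < π n := by
  induction n with
  | zero => exact hπ0
  | succ m ih =>
    rw [hπ m]
    exact div_pos (mul_pos ih (hb m)) (ha (m + 1) (Nat.le_add_left 1 m))

theorem hasSum_div_tsum_of_pos {π : ℕ → ℝ} (hπ : ∀ n, 0 < π n) (hsum : Summable π) :
    HasSum (fun n => π n / ∑' m, π m) 1 := by
  have hZ : 0 < ∑' m, π m := hsum.tsum_pos (fun n => (hπ n).le) 0 (hπ 0)
  have h := (hsum.div_const (∑' m, π m)).hasSum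
  rwa [tsum_div_const, div_self hZ.ne'] at h

theorem birth_death_tail_sum_comparison_general
    (b a : ℕ → ℝ) (hb : ∀ k, 0 < b k) (ha : ∀ k, 1 ≤ k → 0 < a k)
    (π : ℕ → ℝ) (hπ0 : π 0 = 1)
    (hπ : ∀ n : ℕ, π (n + 1) = π n * b n / a (n + 1))
    (hπsum : Summable π)
    (μ : ℕ → ℝ) (hμ : ∀ n, μ n = π n / ∑' m : ℕ, π m)
    (ρ : ℕ → ℝ) (hρmono : StrictMono ρ)
    (hρ1 : Summable (fun n => μ n * ρ n))
    (g : ℕ → ℝ) (hgsum : Summable (fun n => μ n * g n))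
    (hgmean : ∑' n : ℕ, μ n * g n = 0)
    (hgLip : (⨆ k : ℕ, |g (k + 1) - g k| / (ρ (k + 1) - ρ k)) = 1) :
    ∀ k : ℕ,
      (∑' i : ℕ, μ (i + k) * g (i + k))
        ≤ ∑' i : ℕ, μ (i + k) * (ρ (i + k) - ∑' n : ℕ, μ n * ρ n) := by
  have hπpos := pos_of_succ_eq_mul_div hb ha (hπ0 ▸ one_pos) hπ
  have hμprob : HasSum μ 1 := funext hμ ▸ hasSum_div_tsum_of_pos hπpos hπsum
  have hμnonneg : ∀ n, 0 ≤ μ n := fun n =>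
    hμ n ▸ div_nonneg (hπpos n).le (tsum_nonneg (hπpos · |>.le))
  set c := ∑' n, μ n * ρ n
  have hcsum : Summable fun n => μ n * c := hμprob.summable.mul_right c
  have hcentered : Summable fun n => μ n * (ρ n - c) := by
    simpa only [mul_sub] using hρ1.sub hcsum
  have hmean : ∑' n, μ n * (ρ n - c) = 0 := by
    simp_rw [mul_sub]
    rw [hρ1.tsum_sub hcsum, tsum_mul_right, hμprob.tsum_eq, one_mul, sub_self]
  have hanti : Antitone (g - fun n => ρ n - c) := fun m n hmn => by
    have := antitone_sub_of_iSup_abs_sub_div_sub_eq_one hρmono hgLip hmn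
    simp only [Pi.sub_apply] at this ⊢
    linarith
  exact tsum_nat_add_mul_le_of_antitone_sub hμnonneg hanti hgsum hcentered (by rw [hgmean, hmean])

/-- Tail-sum comparison lemma (Liu–Ma): let `μ` be the normalized reversible
invariant probability of a positive recurrent birth–death chain on ℕ, let
`ρ : ℕ → ℝ` be increasing with `ρ ∈ L²(μ)`, and let `g` satisfy `μ(g) = 0`
and `sup_k |g(k+1)-g(k)|/(ρ(k+1)-ρ(k)) = 1`. Then for every `k ≥ 0`:
`∑_{i≥k} μ_i g(i) ≤ ∑_{i≥k} μ_i (ρ(i) - μ(ρ))`. -/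
theorem birth_death_tail_sum_comparison
    (b a : ℕ → ℝ) (hb : ∀ k, 0 < b k) (ha : ∀ k, 1 ≤ k → 0 < a k)
    (π : ℕ → ℝ) (hπ0 : π 0 = 1)
    (hπ : ∀ n : ℕ, π (n + 1) = π n * b n / a (n + 1))
    (hπsum : Summable π)
    (μ : ℕ → ℝ) (hμ : ∀ n, μ n = π n / ∑' m : ℕ, π m)
    (ρ : ℕ → ℝ) (hρmono : StrictMono ρ)
    (hρ2 : Summable (fun n => μ n * ρ n ^ 2))
    (hρ1 : Summable (fun n => μ n * ρ n))
    (g : ℕ → ℝ) (hgsum : Summable (fun n => μ n * g n))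
    (hgmean : ∑' n : ℕ, μ n * g n = 0)
    (hgLip : (⨆ k : ℕ, |g (k + 1) - g k| / (ρ (k + 1) - ρ k)) = 1) :
    ∀ k : ℕ,
      (∑' i : ℕ, μ (i + k) * g (i + k))
        ≤ ∑' i : ℕ, μ (i + k) * (ρ (i + k) - ∑' n : ℕ, μ n * ρ n) :=
  birth_death_tail_sum_comparison_general b a hb ha π hπ0 hπ hπsum μ hμ ρ hρmono hρ1 g hgsum hgmean
    hgLip
end

section
/- For the M/M/∞ queue (b_k = λ, a_k = k, μ = Poisson(λ)): if g : ℕ → ℝ has Lipschitz seminorm ‖g‖_Lip = sup_n|g(n+1)−g(n)| ≤ 1, then G = (−ℒ)^{−1}g satisfies ‖G‖_Lip ≤ 1, and its carré-du-champ Γ(G)(n) = ½(λ(G(n+1)−G(n))² + n(G(n−1)−G(n))²) satisfies Γ(G)(n) ≤ (λ+n)/2. -/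
/-!
Multiplying the Poisson equation by `μ(n)` and using `n μ(n) = λ μ(n-1)` turns it into
`φ(n) - φ(n-1) = -μ(n) g(n)` for the flux `φ(n) = λ μ(n) (G(n+1) - G(n))`, so
`φ(n) = -∑_{k ≤ n} μ(k) g(k)`, which (as `g` has mean zero) is minus the covariance of
`1_{[0,n]}` and `g` under `μ`. That covariance is nonpositive for every nondecreasing function;
applied to `k ± g(k)` it gives `|φ(n)| ≤ -Cov(1_{[0,n]}, id) = λ μ(n)`,
i.e. `|G(n+1) - G(n)| ≤ 1`.
-/

open ProbabilityTheory Finset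

set_option linter.deprecated false

/-- `covIic p f n` is the covariance of `1_{[0,n]}` and `f` under the probability weights `p`. -/
noncomputable def covIic (p f : ℕ → ℝ) (n : ℕ) : ℝ :=
  ∑ m ∈ range (n + 1), p m * f m - (∑ m ∈ range (n + 1), p m) * ∑' k, p k * f k

section covIic

variable {p f g : ℕ → ℝ}

lemma covIic_add (hf : Summable fun k => p k * f k) (hg : Summable fun k => p k * g k) (n : ℕ) :
    covIic p (f + g) n = covIic p f n + covIic p g n := by
  simp only [covIic, Pi.add_apply, mul_add, sum_add_distrib, hf.tsum_add hg]
  ring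

lemma covIic_sub (hf : Summable fun k => p k * f k) (hg : Summable fun k => p k * g k) (n : ℕ) :
    covIic p (f - g) n = covIic p f n - covIic p g n := by
  simp only [covIic, Pi.sub_apply, mul_sub, sum_sub_distrib, hf.tsum_sub hg]
  ring

lemma covIic_of_tsum_eq_zero (hf : ∑' k, p k * f k = 0) (n : ℕ) :
    covIic p f n = ∑ m ∈ range (n + 1), p m * f m := by
  simp [covIic, hf]

/-- Chebyshev's sum inequality for the nonincreasing indicator `1_{[0,n]}`. -/
lemma covIic_nonpos_of_monotone (hp₀ : ∀ k, 0 ≤ p k) (hp : HasSum p 1) (hf : Monotone f)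
    (hpf : Summable fun k => p k * f k) (n : ℕ) : covIic p f n ≤ 0 := by
  set F := ∑ m ∈ range (n + 1), p m
  set M := ∑' k, p (k + (n + 1))
  set S := ∑ m ∈ range (n + 1), p m * f m
  set T := ∑' k, p (k + (n + 1)) * f (k + (n + 1))
  have hFM : F + M = 1 := by rw [hp.summable.sum_add_tsum_nat_add, hp.tsum_eq]
  have hST : S + T = ∑' k, p k * f k := hpf.sum_add_tsum_nat_add (n + 1)
  have hF : 0 ≤ F := sum_nonneg fun m _ => hp₀ m
  have hM : 0 ≤ M := tsum_nonneg fun k => hp₀ _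
  have hS : S ≤ F * f n := by
    rw [sum_mul]
    exact sum_le_sum fun m hm =>
      mul_le_mul_of_nonneg_left (hf (Nat.lt_succ_iff.mp (mem_range.mp hm))) (hp₀ m)
  have hT : M * f n ≤ T := by
    rw [← tsum_mul_right]
    refine Summable.tsum_le_tsum (fun k => mul_le_mul_of_nonneg_left (hf (by omega)) (hp₀ _))
      (((summable_nat_add_iff (n + 1)).mpr hp.summable).mul_right _)
      ((summable_nat_add_iff (n + 1)).mpr hpf)
  have hcov : covIic p f n = S * M - F * T := by
    rw [show covIic p f n = S - F * (S + T) by rw [hST]; rfl]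
    linear_combination (-S) * hFM
  rw [hcov]
  nlinarith [mul_le_mul_of_nonneg_right hS hM, mul_le_mul_of_nonneg_left hT hF]

lemma abs_covIic_le_of_abs_sub_le_one (hp₀ : ∀ k, 0 ≤ p k) (hp : HasSum p 1)
    (hg : ∀ k, |g (k + 1) - g k| ≤ 1) (hpg : Summable fun k => p k * g k)
    (hpid : Summable fun k => p k * (k : ℝ)) (n : ℕ) :
    |covIic p g n| ≤ -covIic p (fun k => (k : ℝ)) n := by
  have hadd : Monotone ((fun k : ℕ => (k : ℝ)) + g) := monotone_nat_of_le_succ fun k => by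
    simp only [Pi.add_apply, Nat.cast_succ]
    linarith [neg_abs_le (g (k + 1) - g k), hg k]
  have hsub : Monotone ((fun k : ℕ => (k : ℝ)) - g) := monotone_nat_of_le_succ fun k => by
    simp only [Pi.sub_apply, Nat.cast_succ]
    linarith [le_abs_self (g (k + 1) - g k), hg k]
  have h₁ := covIic_nonpos_of_monotone hp₀ hp hadd (by simpa [mul_add] using hpid.add hpg) n
  have h₂ := covIic_nonpos_of_monotone hp₀ hp hsub (by simpa [mul_sub] using hpid.sub hpg) n
  rw [covIic_add hpid hpg] at h₁
  rw [covIic_sub hpid hpg] at h₂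
  exact abs_le.mpr ⟨by linarith, by linarith⟩

end covIic

section poisson

variable (r : NNReal)

lemma poissonPMFReal_succ_mul (n : ℕ) :
    poissonPMFReal r (n + 1) * ((n : ℝ) + 1) = r * poissonPMFReal r n := by
  simp only [poissonPMFReal, Nat.factorial_succ, pow_succ]
  push_cast
  field_simp

lemma hasSum_poissonPMFReal_mul_cast : HasSum (fun n => poissonPMFReal r n * (n : ℝ)) r := by
  rw [← hasSum_nat_add_iff' 1]
  simp only [sum_range_one, Nat.cast_zero, mul_zero, sub_zero, Nat.cast_succ,
    poissonPMFReal_succ_mul]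
  have h : HasSum (fun n => (r : ℝ) * poissonPMFReal r n) (r * 1) :=
    (poissonPMFRealSum r).mul_left (r : ℝ)
  rwa [mul_one] at h

lemma sum_range_poissonPMFReal_mul_cast (n : ℕ) :
    ∑ m ∈ range (n + 1), poissonPMFReal r m * (m : ℝ) =
      r * ∑ m ∈ range n, poissonPMFReal r m := by
  simp [sum_range_succ', poissonPMFReal_succ_mul, mul_sum]

lemma covIic_poissonPMFReal_cast (n : ℕ) :
    covIic (poissonPMFReal r) (fun k => (k : ℝ)) n = -(r * poissonPMFReal r n) := by
  rw [covIic, sum_range_poissonPMFReal_mul_cast, (hasSum_poissonPMFReal_mul_cast r).tsum_eq,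
    sum_range_succ]
  ring

lemma mul_poissonPMFReal_mul_sub_eq_neg_sum {g G : ℕ → ℝ}
    (hG : ∀ n : ℕ, (r : ℝ) * (G (n + 1) - G n) + (n : ℝ) * (G (n - 1) - G n) = -g n)
    (n : ℕ) :
    r * poissonPMFReal r n * (G (n + 1) - G n) =
      -∑ k ∈ range (n + 1), poissonPMFReal r k * g k := by
  induction n with
  | zero => simpa [mul_assoc, mul_left_comm] using congrArg (poissonPMFReal r 0 * ·) (hG 0)
  | succ n ih =>
    have h := hG (n + 1)
    simp only [Nat.add_sub_cancel, Nat.cast_succ] at h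
    rw [sum_range_succ, neg_add, ← ih]
    linear_combination
      poissonPMFReal r (n + 1) * h + (G (n + 1) - G n) * poissonPMFReal_succ_mul r n

end poisson

theorem mmInf_poisson_solution_lipschitz_general
    (lam : NNReal) (hlam : 0 < lam)
    (g : ℕ → ℝ) (hgLip : ∀ n : ℕ, |g (n + 1) - g n| ≤ 1)
    (hgsum : Summable (fun n => poissonPMFReal lam n * g n))
    (hgmean : ∑' n : ℕ, poissonPMFReal lam n * g n = 0)
    (G : ℕ → ℝ)
    (hGsol : ∀ n : ℕ,
      (lam : ℝ) * (G (n + 1) - G n) + (n : ℝ) * (G (n - 1) - G n) = -g n) :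
    (∀ n : ℕ, |G (n + 1) - G n| ≤ 1) ∧
    (∀ n : ℕ,
      (1 / 2) * ((lam : ℝ) * (G (n + 1) - G n) ^ 2
          + (n : ℝ) * (G (n - 1) - G n) ^ 2)
        ≤ ((lam : ℝ) + (n : ℝ)) / 2) := by
  have hLip : ∀ n : ℕ, |G (n + 1) - G n| ≤ 1 := fun n => by
    have hpos : 0 < (lam : ℝ) * poissonPMFReal lam n :=
      mul_pos (by exact_mod_cast hlam) (poissonPMFReal_pos hlam)
    have hflux : |(lam : ℝ) * poissonPMFReal lam n * (G (n + 1) - G n)| =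
        |covIic (poissonPMFReal lam) g n| := by
      rw [covIic_of_tsum_eq_zero hgmean, mul_poissonPMFReal_mul_sub_eq_neg_sum lam hGsol, abs_neg]
    have hcov := abs_covIic_le_of_abs_sub_le_one (fun _ => poissonPMFReal_nonneg)
      (poissonPMFRealSum lam) hgLip hgsum (hasSum_poissonPMFReal_mul_cast lam).summable n
    rw [covIic_poissonPMFReal_cast, neg_neg, ← hflux, abs_mul, abs_of_pos hpos] at hcov
    exact le_of_mul_le_mul_left (by linarith) hpos
  refine ⟨hLip, fun n => ?_⟩
  have hfwd := (sq_le_one_iff_abs_le_one _).mpr (hLip n)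
  have hbwd : (G (n - 1) - G n) ^ 2 ≤ 1 := by
    cases n with
    | zero => simp
    | succ n =>
      rw [Nat.add_sub_cancel, ← neg_sub, neg_sq]
      exact (sq_le_one_iff_abs_le_one _).mpr (hLip n)
  nlinarith [mul_le_mul_of_nonneg_left hfwd lam.2,
    mul_le_mul_of_nonneg_left hbwd (Nat.cast_nonneg (α := ℝ) n)]

/-- M/M/∞ queue (`b_k = λ`, `a_k = k`, `μ = Poisson(λ)`): if `g : ℕ → ℝ` has
Lipschitz seminorm `sup_n |g(n+1)-g(n)| ≤ 1`, then the solution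
`G = (-ℒ)⁻¹ g` of the Poisson equation (the mean-zero `L²(μ)` solution of
`-ℒG = g`, where `ℒf(n) = λ(f(n+1)-f(n)) + n(f(n-1)-f(n))`) satisfies
`‖G‖_Lip ≤ 1`, and its carré-du-champ
`Γ(G)(n) = ½(λ(G(n+1)-G(n))² + n(G(n-1)-G(n))²)` satisfies
`Γ(G)(n) ≤ (λ+n)/2`. -/
theorem mmInf_poisson_solution_lipschitz
    (lam : NNReal) (hlam : 0 < lam)
    (g : ℕ → ℝ) (hgLip : ∀ n : ℕ, |g (n + 1) - g n| ≤ 1)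
    (hgsum : Summable (fun n => poissonPMFReal lam n * g n))
    (hgmean : ∑' n : ℕ, poissonPMFReal lam n * g n = 0)
    (G : ℕ → ℝ)
    (hGsol : ∀ n : ℕ,
      (lam : ℝ) * (G (n + 1) - G n) + (n : ℝ) * (G (n - 1) - G n) = -g n)
    (hGL2 : Summable (fun n => poissonPMFReal lam n * G n ^ 2))
    (hGmean : ∑' n : ℕ, poissonPMFReal lam n * G n = 0) :
    (∀ n : ℕ, |G (n + 1) - G n| ≤ 1) ∧
    (∀ n : ℕ,
      (1 / 2) * ((lam : ℝ) * (G (n + 1) - G n) ^ 2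
          + (n : ℝ) * (G (n - 1) - G n) ^ 2)
        ≤ ((lam : ℝ) + (n : ℝ)) / 2) :=
  mmInf_poisson_solution_lipschitz_general lam hlam g hgLip hgsum hgmean G hGsol
end
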